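/- Let G be a finite bipartite simple graph with bipartition (A, B), let M[G] be its fundamental transversal matroid, let (U, V) be a partition of A ∪ B, and let S be a vertex cover of the crossing subgraph H. Let X ⊆ U and Y ⊆ V be independent sets of M[G]. If there exist a matching M_X certifying the independence of X and a matching M_Y certifying the independence of Y such that the signatures 𝒞(X, M_X) and 𝒞(Y, M_Y) are compatible, then X ∪ Y is independent in M[G]. -/

import Mathlib

open Set

noncomputable def mrank {α : Type*} (M : Matroid α) (X : Set α) : ℕ :=
  sSup {n | ∃ I, I ⊆ X ∧ M.Indep I ∧ I.ncard = n}

noncomputable def connVal {α : Type*} (M : Matroid α) (U : Set α) : ℕ :=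
  mrank M U + mrank M (M.E \ U) - mrank M M.E

def Sim {α : Type*} (M : Matroid α) (U X X' : Set α) : Prop :=
  ∀ Z ⊆ M.E \ U, (M.Indep (X ∪ Z) ↔ M.Indep (X' ∪ Z))

def SimClassesLE {α : Type*} (M : Matroid α) (U : Set α) (k : ℕ) : Prop :=
  ∃ f : Set α → Fin k, ∀ X X' : Set α, X ⊆ U → X' ⊆ U → f X = f X' → Sim M U X X'

structure Decomp {α : Type*} (M : Matroid α) where
  V : Type
  fin : Finite V
  T : SimpleGraph V
  conn : T.Connected
  acyc : T.IsAcyclic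
  deg : ∀ v : V, (T.neighborSet v).ncard = 1 ∨ (T.neighborSet v).ncard = 3
  leafEquiv : M.E ≃ {v : V // (T.neighborSet v).ncard = 1}

def Decomp.Displays {α : Type*} {M : Matroid α} (D : Decomp M) (U : Set α) : Prop :=
  ∃ u v : D.V, D.T.Adj u v ∧
    U = {x | ∃ h : x ∈ M.E, (D.T.deleteEdges {s(u, v)}).Reachable (D.leafEquiv ⟨x, h⟩).1 u}

def bwLE {α : Type*} (M : Matroid α) (k : ℕ) : Prop :=
  ∃ D : Decomp M, ∀ U, D.Displays U → connVal M U + 1 ≤ k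

def dwLE {α : Type*} (M : Matroid α) (k : ℕ) : Prop :=
  ∃ D : Decomp M, ∀ U, D.Displays U → SimClassesLE M U k

def Pigeonhole {α : Type*} (C : Set (Matroid α)) : Prop :=
  ∀ l : ℕ, 0 < l → ∃ ρ : ℕ, ∀ M ∈ C, bwLE M l → dwLE M ρ

/-- A matching of a graph: a set of edges, pairwise sharing no vertex. -/
def IsGraphMatching {α : Type*} (G : SimpleGraph α) (m : Set (Sym2 α)) : Prop :=
  m ⊆ G.edgeSet ∧ m.Pairwise fun e f => ∀ x, x ∈ e → x ∉ f

/-- A matching \`m\` certifies the independence of \`X\` in the fundamental transversal matroid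
of the bipartite graph \`G\` with bipartition \`(A, B)\`: \`|m| = |X ∩ A|\` and every edge of
\`m\` joins a vertex of \`X ∩ A\` to a vertex of \`B \ X\`. -/
def CertifiesIndep {α : Type*} (G : SimpleGraph α) (A B X : Set α) (m : Set (Sym2 α)) : Prop :=
  IsGraphMatching G m ∧ m.Finite ∧ m.ncard = (X ∩ A).ncard ∧
    ∀ e ∈ m, ∃ a b, a ∈ X ∩ A ∧ b ∈ B \ X ∧ e = s(a, b)

/-- Signatures: the data (S₁, 𝒮₂, S₃, S₄). -/
structure Signature (α : Type*) where
  s1 : Set α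
  s2 : Set (Set α)
  s3 : Set α
  s4 : Set α

/-- The signature 𝒞(X, m) of an independent set \`X ⊆ P\` with certifying matching \`m\`,
relative to the bipartition (A, B), the vertex cover \`S\`, and the partition \`{P, Q}\`. -/
def signatureOf {α : Type*} (G : SimpleGraph α) (A B S P Q X : Set α)
    (m : Set (Sym2 α)) : Signature α where
  s1 := {b | b ∈ B ∩ P ∩ S ∧ (b ∈ X ∨ ∃ e ∈ m, b ∈ e)}
  s2 := {Z | Z ⊆ A ∩ Q ∩ S ∧ ∃ m' : Set (Sym2 α), IsGraphMatching G m' ∧ m ⊆ m' ∧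
          (m' \ m).Finite ∧ (m' \ m).ncard = Z.ncard ∧
          ∀ e ∈ m' \ m, ∃ z b, z ∈ Z ∧ b ∈ (B ∩ P) \ (S ∪ X) ∧ e = s(z, b)}
  s3 := {a | a ∈ A ∩ P ∩ S ∧ ∃ b ∈ (B ∩ Q) \ S, s(a, b) ∈ m}
  s4 := {b | b ∈ B ∩ Q ∩ S ∧ ∃ a ∈ A ∩ P, s(a, b) ∈ m}

/-- Compatibility of a signature of a subset of U with a signature of a subset of V. -/
def SigCompatible {α : Type*} (σ τ : Signature α) : Prop :=
  σ.s1 ∩ τ.s4 = ∅ ∧ τ.s3 ∈ σ.s2 ∧ σ.s3 ∈ τ.s2 ∧ σ.s4 ∩ τ.s1 = ∅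

/-- \`S\` is a vertex cover of the crossing subgraph \`H\` determined by the partition (U, V). -/
def IsCrossingCover {α : Type*} (G : SimpleGraph α) (A B U V S : Set α) : Prop :=
  ∀ x y, G.Adj x y →
    ((x ∈ B ∩ U ∧ y ∈ A ∩ V) ∨ (x ∈ B ∩ V ∧ y ∈ A ∩ U)) → x ∈ S ∨ y ∈ S

/-! The certificate for `X ∪ Y` keeps the edges of `M_X` and `M_Y` except those at `S₃` and
`T₃`, whose vertices are rematched by the extensions witnessing `T₃ ∈ 𝒮₂` and `S₃ ∈ 𝒯₂`.
A kept edge of `M_X` leaving `U` has its `A`-end outside `S₃`, so, `S` being a cover, its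
`B`-end lies in `S₄`; the conditions `S₁ ∩ T₄ = ∅` and `S₄ ∩ T₁ = ∅` then keep the `B`-vertices
used by the two sides apart. -/

section

variable {α : Type*} {G : SimpleGraph α}

theorem IsGraphMatching.mono {m m' : Set (Sym2 α)} (h : IsGraphMatching G m') (hm : m ⊆ m') :
    IsGraphMatching G m :=
  ⟨hm.trans h.1, h.2.mono hm⟩

theorem IsGraphMatching.eq_of_mem {m : Set (Sym2 α)} (h : IsGraphMatching G m)
    {e f : Sym2 α} {x : α} (he : e ∈ m) (hf : f ∈ m) (hxe : x ∈ e) (hxf : x ∈ f) : e = f := by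
  by_contra hne
  exact h.2 he hf hne x hxe hxf

def MatchesInto (G : SimpleGraph α) (m : Set (Sym2 α)) (T R : Set α) : Prop :=
  IsGraphMatching G m ∧ ∀ e ∈ m, ∃ a b, a ∈ T ∧ b ∈ R ∧ e = s(a, b)

def Saturates (m : Set (Sym2 α)) (T : Set α) : Prop :=
  ∀ a ∈ T, ∃ e ∈ m, a ∈ e

theorem Saturates.union {m₁ m₂ : Set (Sym2 α)} {T₁ T₂ : Set α} (h₁ : Saturates m₁ T₁)
    (h₂ : Saturates m₂ T₂) : Saturates (m₁ ∪ m₂) (T₁ ∪ T₂) := by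
  rintro a (ha | ha)
  · obtain ⟨e, he, hae⟩ := h₁ a ha
    exact ⟨e, Or.inl he, hae⟩
  · obtain ⟨e, he, hae⟩ := h₂ a ha
    exact ⟨e, Or.inr he, hae⟩

namespace MatchesInto

variable {m m₁ m₂ : Set (Sym2 α)} {T T₁ T₂ R R₁ R₂ : Set α}

theorem mono (h : MatchesInto G m T R) {T' R' : Set α} (hT : T ⊆ T') (hR : R ⊆ R') :
    MatchesInto G m T' R' := by
  refine ⟨h.1, fun e he => ?_⟩
  obtain ⟨a, b, ha, hb, rfl⟩ := h.2 e he
  exact ⟨a, b, hT ha, hR hb, rfl⟩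

theorem mem_union_of_mem (h : MatchesInto G m T R) {e : Sym2 α} {x : α} (he : e ∈ m)
    (hx : x ∈ e) : x ∈ T ∪ R := by
  obtain ⟨a, b, ha, hb, rfl⟩ := h.2 e he
  rcases Sym2.mem_iff.mp hx with rfl | rfl
  exacts [Or.inl ha, Or.inr hb]

theorem eq_of_mem (h : MatchesInto G m T R) (hTR : Disjoint T R) {e : Sym2 α} {x y : α}
    (he : e ∈ m) (hxe : x ∈ e) (hye : y ∈ e) (hx : x ∈ T) (hy : y ∈ T) : x = y := by
  obtain ⟨a, b, -, hb, rfl⟩ := h.2 e he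
  have hb' : b ∉ T := fun hbT => hTR.notMem_of_mem_left hbT hb
  rcases Sym2.mem_iff.mp hxe with rfl | rfl
  · rcases Sym2.mem_iff.mp hye with rfl | rfl
    exacts [rfl, absurd hy hb']
  · exact absurd hx hb'

theorem union_of_isGraphMatching (h₁ : MatchesInto G m₁ T₁ R₁) (h₂ : MatchesInto G m₂ T₂ R₂)
    (hm : IsGraphMatching G (m₁ ∪ m₂)) : MatchesInto G (m₁ ∪ m₂) (T₁ ∪ T₂) (R₁ ∪ R₂) := by
  refine ⟨hm, ?_⟩
  rintro e (he | he)
  · exact (h₁.mono subset_union_left subset_union_left).2 e he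
  · exact (h₂.mono subset_union_right subset_union_right).2 e he

theorem union (h₁ : MatchesInto G m₁ T₁ R₁) (h₂ : MatchesInto G m₂ T₂ R₂)
    (hdisj : Disjoint (T₁ ∪ R₁) (T₂ ∪ R₂)) :
    MatchesInto G (m₁ ∪ m₂) (T₁ ∪ T₂) (R₁ ∪ R₂) := by
  have hcross : ∀ e ∈ m₁, ∀ f ∈ m₂, ∀ x, x ∈ e → x ∉ f := fun e he f hf x hxe hxf =>
    hdisj.notMem_of_mem_left (h₁.mem_union_of_mem he hxe) (h₂.mem_union_of_mem hf hxf)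
  refine h₁.union_of_isGraphMatching h₂
    ⟨union_subset h₁.1.1 h₂.1.1, pairwise_union.2 ⟨h₁.1.2, h₂.1.2, ?_⟩⟩
  exact fun e he f hf _ => ⟨hcross e he f hf, fun x hxf hxe => hcross e he f hf x hxe hxf⟩

theorem ncard_eq (h : MatchesInto G m T R) (hTR : Disjoint T R) (hsat : Saturates m T) :
    m.ncard = T.ncard := by
  choose end_T end_R hT hR hend using h.2
  have hmem : ∀ e (he : e ∈ m), end_T e he ∈ e := fun e he => by
    have := Sym2.mem_mk_left (end_T e he) (end_R e he)
    rwa [← hend e he] at this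
  refine ncard_congr end_T hT (fun e f he hf hef => ?_) fun a ha => ?_
  · exact h.1.eq_of_mem he hf (hmem e he) (hef ▸ hmem f hf)
  · obtain ⟨e, he, hae⟩ := hsat a ha
    exact ⟨e, he, h.eq_of_mem hTR he (hmem e he) hae (hT e he) ha⟩

theorem saturates_of_ncard_eq (h : MatchesInto G m T R) (hTR : Disjoint T R) (hT : T.Finite)
    (hcard : m.ncard = T.ncard) : Saturates m T := by
  set T' := {a ∈ T | ∃ e ∈ m, a ∈ e}
  have h' : MatchesInto G m T' R := by
    refine ⟨h.1, fun e he => ?_⟩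
    obtain ⟨a, b, ha, hb, rfl⟩ := h.2 e he
    exact ⟨a, b, ⟨ha, _, he, Sym2.mem_mk_left _ _⟩, hb, rfl⟩
  have hcard' := h'.ncard_eq (hTR.mono_left (sep_subset _ _)) fun a ha => ha.2
  have hT' : T' = T := eq_of_subset_of_ncard_le (sep_subset _ _) (by omega) hT
  exact fun a ha => (hT' ▸ ha : a ∈ T').2

end MatchesInto

section Certificates

variable {A B X : Set α} {m : Set (Sym2 α)}

theorem CertifiesIndep.matchesInto (h : CertifiesIndep G A B X m) :
    MatchesInto G m (X ∩ A) (B \ X) :=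
  ⟨h.1, h.2.2.2⟩

theorem disjoint_inter_sdiff (hAB : Disjoint A B) : Disjoint (X ∩ A) (B \ X) :=
  hAB.mono inter_subset_right sdiff_subset

theorem CertifiesIndep.saturates (h : CertifiesIndep G A B X m) (hAB : Disjoint A B)
    (hX : (X ∩ A).Finite) : Saturates m (X ∩ A) :=
  h.matchesInto.saturates_of_ncard_eq (disjoint_inter_sdiff hAB) hX h.2.2.1

theorem MatchesInto.certifiesIndep (h : MatchesInto G m (X ∩ A) (B \ X)) (hAB : Disjoint A B)
    (hm : m.Finite) (hsat : Saturates m (X ∩ A)) : CertifiesIndep G A B X m :=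
  ⟨h.1, hm, h.ncard_eq (disjoint_inter_sdiff hAB) hsat, h.2⟩

end Certificates

theorem IsCrossingCover.symm {A B P Q S : Set α} (hS : IsCrossingCover G A B P Q S) :
    IsCrossingCover G A B Q P S :=
  fun x y hxy h => hS x y hxy h.symm

theorem IsCrossingCover.mem_or_mem {A B P Q S : Set α} (hS : IsCrossingCover G A B P Q S)
    {a b : α} (hab : G.Adj a b) (ha : a ∈ A ∩ P) (hb : b ∈ B ∩ Q) : a ∈ S ∨ b ∈ S :=
  (hS b a hab.symm (Or.inr ⟨hb, ha⟩)).symm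

/-- The `B`-vertices that the `P`-side of the combined certificate may use. -/
def Signature.claimB (σ : Signature α) (B S P : Set α) : Set α :=
  {b | b ∈ B ∩ P ∧ (b ∈ S → b ∈ σ.s1)} ∪ σ.s4

theorem Signature.disjoint_claimB {B S P Q : Set α} {σ τ : Signature α} (hPQ : Disjoint P Q)
    (hσ : σ.s4 ⊆ Q ∩ S) (hτ : τ.s4 ⊆ P ∩ S) (h14 : Disjoint σ.s1 τ.s4)
    (h41 : Disjoint σ.s4 τ.s1) : Disjoint (σ.claimB B S P) (τ.claimB B S Q) := by
  rw [disjoint_left]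
  rintro b (⟨⟨-, hP⟩, hσ1⟩ | hσ4) (⟨⟨-, hQ⟩, hτ1⟩ | hτ4)
  · exact hPQ.notMem_of_mem_left hP hQ
  · exact h14.notMem_of_mem_left (hσ1 (hτ hτ4).2) hτ4
  · exact h41.notMem_of_mem_left hσ4 (hτ1 (hσ hσ4).2)
  · exact hPQ.notMem_of_mem_left (hτ hτ4).1 (hσ hσ4).1

section Signatures

variable {A B S P Q X Y Z : Set α} {m : Set (Sym2 α)}

theorem signatureOf_s3_subset (hAB : Disjoint A B) (hm : CertifiesIndep G A B X m) :
    (signatureOf G A B S P Q X m).s3 ⊆ X ∩ A := by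
  rintro a ⟨⟨⟨ha, -⟩, -⟩, b, -, hab⟩
  obtain ⟨a', b', ha', hb', heq⟩ := hm.2.2.2 _ hab
  rcases Sym2.eq_iff.mp heq with ⟨rfl, -⟩ | ⟨rfl, -⟩
  exacts [ha', absurd hb'.1 (hAB.notMem_of_mem_left ha)]

theorem signatureOf_s4_subset : (signatureOf G A B S P Q X m).s4 ⊆ Q ∩ S :=
  fun _ hb => ⟨hb.1.1.2, hb.1.2⟩

theorem signatureOf_claimB_subset : (signatureOf G A B S P Q X m).claimB B S P ⊆ B := by
  rintro b (⟨⟨hb, -⟩, -⟩ | ⟨⟨⟨hb, -⟩, -⟩, -⟩)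
  exacts [hb, hb]

theorem inter_subset_signatureOf_claimB (hXP : X ⊆ P) :
    X ∩ B ⊆ (signatureOf G A B S P Q X m).claimB B S P :=
  fun _ ⟨hX, hB⟩ => Or.inl ⟨⟨hB, hXP hX⟩, fun hS => ⟨⟨⟨hB, hXP hX⟩, hS⟩, Or.inl hX⟩⟩

theorem signatureOf_claimB_sdiff_subset {m' : Set (Sym2 α)} (hYQ : Y ⊆ Q)
    (hclaim : Disjoint ((signatureOf G A B S P Q X m).claimB B S P)
      ((signatureOf G A B S Q P Y m').claimB B S Q)) :
    (signatureOf G A B S P Q X m).claimB B S P \ X ⊆ B \ (X ∪ Y) := fun _ ⟨hb, hbX⟩ =>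
  ⟨signatureOf_claimB_subset hb, fun hbXY => hbXY.elim hbX fun hbY => hclaim.notMem_of_mem_left
    hb (inter_subset_signatureOf_claimB hYQ ⟨hbY, signatureOf_claimB_subset hb⟩)⟩

/-- If the edge crosses to `Q`, the cover `S` must contain its `B`-end, which then lies in
`S₄`. -/
theorem mem_signatureOf_claimB (hS : IsCrossingCover G A B P Q S) (hBPQ : B ⊆ P ∪ Q)
    (hXP : X ⊆ P) (hm : CertifiesIndep G A B X m) {a b : α} (hab : s(a, b) ∈ m)
    (ha : a ∈ X ∩ A) (hb : b ∈ B) (hkept : a ∉ (signatureOf G A B S P Q X m).s3) :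
    b ∈ (signatureOf G A B S P Q X m).claimB B S P := by
  rcases hBPQ hb with hP | hQ
  · exact Or.inl ⟨⟨hb, hP⟩, fun hbS => ⟨⟨⟨hb, hP⟩, hbS⟩, Or.inr ⟨_, hab, Sym2.mem_mk_right _ _⟩⟩⟩
  · have haP : a ∈ A ∩ P := ⟨ha.2, hXP ha.1⟩
    have hbS : b ∈ S := by
      by_contra hbS
      have haS := (hS.mem_or_mem (hm.1.1 hab) haP ⟨hb, hQ⟩).resolve_right hbS
      exact hkept ⟨⟨haP, haS⟩, b, ⟨⟨hb, hQ⟩, hbS⟩, hab⟩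
    exact Or.inr ⟨⟨⟨hb, hQ⟩, hbS⟩, a, haP, hab⟩

/-- The witness is the set of edges of `m` avoiding `S₃`, together with the extension of `m`
that matches `Z ∈ 𝒮₂`. -/
theorem exists_matchesInto_signatureOf_claimB (hAB : Disjoint A B)
    (hS : IsCrossingCover G A B P Q S) (hBPQ : B ⊆ P ∪ Q) (hXP : X ⊆ P)
    (hm : CertifiesIndep G A B X m) (hX : (X ∩ A).Finite)
    (hZ : Z ∈ (signatureOf G A B S P Q X m).s2) (hZfin : Z.Finite) :
    ∃ N : Set (Sym2 α), N.Finite ∧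
      MatchesInto G N ((X ∩ A) \ (signatureOf G A B S P Q X m).s3 ∪ Z)
        ((signatureOf G A B S P Q X m).claimB B S P \ X) ∧
      Saturates N ((X ∩ A) \ (signatureOf G A B S P Q X m).s3 ∪ Z) := by
  set σ := signatureOf G A B S P Q X m
  obtain ⟨hZA, m', hm', hmm', hext_fin, hext_card, hext⟩ := hZ
  set kept := {e ∈ m | ∀ a ∈ σ.s3, a ∉ e}
  have hkept : MatchesInto G kept ((X ∩ A) \ σ.s3) (σ.claimB B S P \ X) := by
    refine ⟨hm.1.mono (sep_subset _ _), fun e he => ?_⟩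
    obtain ⟨a, b, ha, hb, rfl⟩ := hm.2.2.2 e he.1
    have ha3 : a ∉ σ.s3 := fun h => he.2 a h (Sym2.mem_mk_left _ _)
    exact ⟨a, b, ⟨ha, ha3⟩, ⟨mem_signatureOf_claimB hS hBPQ hXP hm he.1 ha hb.1 ha3, hb.2⟩, rfl⟩
  have hext' : MatchesInto G (m' \ m) Z ((B ∩ P) \ (S ∪ X)) := ⟨hm'.mono sdiff_subset, hext⟩
  have hkept_sat : Saturates kept ((X ∩ A) \ σ.s3) := fun a ha => by
    obtain ⟨e, he, hae⟩ := hm.saturates hAB hX a ha.1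
    refine ⟨e, ⟨he, fun a₀ ha₀ ha₀e => ha.2 ?_⟩, hae⟩
    rwa [hm.matchesInto.eq_of_mem (disjoint_inter_sdiff hAB) he hae ha₀e ha.1
      (signatureOf_s3_subset hAB hm ha₀)]
  have hext_sat : Saturates (m' \ m) Z := hext'.saturates_of_ncard_eq
    (hAB.mono (hZA.trans (inter_subset_left.trans inter_subset_left))
      (sdiff_subset.trans inter_subset_left)) hZfin hext_card
  have hextB : (B ∩ P) \ (S ∪ X) ⊆ σ.claimB B S P \ X :=
    fun b ⟨hb, hSX⟩ => ⟨Or.inl ⟨hb, fun hS => absurd (Or.inl hS) hSX⟩, fun hX => hSX (Or.inr hX)⟩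
  refine ⟨kept ∪ (m' \ m), (hm.2.1.subset (sep_subset _ _)).union hext_fin, ?_,
    hkept_sat.union hext_sat⟩
  refine (hkept.union_of_isGraphMatching hext' (hm'.mono ?_)).mono subset_rfl ?_
  · exact union_subset ((sep_subset _ _).trans hmm') sdiff_subset
  · exact union_subset subset_rfl hextB

end Signatures

theorem sdiff_union_union_sdiff_union {X Y S T : Set α} (hS : S ⊆ X) (hT : T ⊆ Y) :
    (X \ S ∪ T) ∪ (Y \ T ∪ S) = X ∪ Y :=
  calc (X \ S ∪ T) ∪ (Y \ T ∪ S) = (X \ S ∪ S) ∪ (Y \ T ∪ T) := by ac_rfl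
    _ = X ∪ Y := by rw [sdiff_union_of_subset hS, sdiff_union_of_subset hT]

theorem disjoint_sdiff_union_sdiff_union {X Y S T : Set α} (hXY : Disjoint X Y) (hS : S ⊆ X)
    (hT : T ⊆ Y) : Disjoint (X \ S ∪ T) (Y \ T ∪ S) := by
  rw [disjoint_left]
  rintro a (⟨hX, haS⟩ | haT) (⟨hY, haT'⟩ | haS')
  · exact hXY.notMem_of_mem_left hX hY
  · exact haS haS'
  · exact haT' haT
  · exact hXY.notMem_of_mem_left (hS haS') (hT haT)

theorem disjoint_union_union_of_subset {A B T₁ T₂ R₁ R₂ : Set α} (hAB : Disjoint A B)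
    (hT₁ : T₁ ⊆ A) (hT₂ : T₂ ⊆ A) (hR₁ : R₁ ⊆ B) (hR₂ : R₂ ⊆ B) (hT : Disjoint T₁ T₂)
    (hR : Disjoint R₁ R₂) : Disjoint (T₁ ∪ R₁) (T₂ ∪ R₂) :=
  disjoint_union_left.2 ⟨disjoint_union_right.2 ⟨hT, hAB.mono hT₁ hR₂⟩,
    disjoint_union_right.2 ⟨(hAB.mono hT₂ hR₁).symm, hR⟩⟩

end

theorem indep_union_of_compatible_signatures_general {α : Type*}
(G : SimpleGraph α) (A B : Set α)
    (hfin : (A ∪ B).Finite) (hAB : Disjoint A B)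
    (M : Matroid α)
    (hInd : ∀ X ⊆ A ∪ B, (M.Indep X ↔ ∃ m, CertifiesIndep G A B X m))
    (U V : Set α) (hUV : U ∪ V = A ∪ B) (hdisj : Disjoint U V)
    (S : Set α) (hS : IsCrossingCover G A B U V S)
    (X Y : Set α) (hXU : X ⊆ U) (hYV : Y ⊆ V)
    (hcomp : ∃ mX mY : Set (Sym2 α), CertifiesIndep G A B X mX ∧ CertifiesIndep G A B Y mY ∧
      SigCompatible (signatureOf G A B S U V X mX) (signatureOf G A B S V U Y mY)) :
    M.Indep (X ∪ Y) := by
  obtain ⟨mX, mY, hmX, hmY, h14, hT3, hS3, h41⟩ := hcomp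
  set σ := signatureOf G A B S U V X mX
  set τ := signatureOf G A B S V U Y mY
  have hB : B ⊆ U ∪ V := hUV ▸ subset_union_right
  have hfinA : ∀ T ⊆ A, T.Finite := fun T hT => hfin.subset (hT.trans subset_union_left)
  have hσ3 : σ.s3 ⊆ X ∩ A := signatureOf_s3_subset hAB hmX
  have hτ3 : τ.s3 ⊆ Y ∩ A := signatureOf_s3_subset hAB hmY
  obtain ⟨NX, hNXfin, hNX, hsatX⟩ := exists_matchesInto_signatureOf_claimB hAB hS hB hXU hmX
    (hfinA _ inter_subset_right) hT3 (hfinA _ (hτ3.trans inter_subset_right))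
  obtain ⟨NY, hNYfin, hNY, hsatY⟩ := exists_matchesInto_signatureOf_claimB hAB hS.symm
    (union_comm U V ▸ hB) hYV hmY (hfinA _ inter_subset_right) hS3
    (hfinA _ (hσ3.trans inter_subset_right))
  have hclaim : Disjoint (σ.claimB B S U) (τ.claimB B S V) :=
    Signature.disjoint_claimB hdisj signatureOf_s4_subset signatureOf_s4_subset
      (disjoint_iff_inter_eq_empty.mpr h14) (disjoint_iff_inter_eq_empty.mpr h41)
  have hA : ((X ∩ A) \ σ.s3 ∪ τ.s3) ∪ ((Y ∩ A) \ τ.s3 ∪ σ.s3) = (X ∪ Y) ∩ A := by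
    rw [sdiff_union_union_sdiff_union hσ3 hτ3, union_inter_distrib_right]
  have hN := hNX.union hNY <| disjoint_union_union_of_subset hAB
    (subset_union_left.trans (hA.subset.trans inter_subset_right))
    (subset_union_right.trans (hA.subset.trans inter_subset_right))
    (sdiff_subset.trans signatureOf_claimB_subset) (sdiff_subset.trans signatureOf_claimB_subset)
    (disjoint_sdiff_union_sdiff_union ((hdisj.mono hXU hYV).mono inter_subset_left
      inter_subset_left) hσ3 hτ3) (hclaim.mono sdiff_subset sdiff_subset)
  have hR : σ.claimB B S U \ X ∪ τ.claimB B S V \ Y ⊆ B \ (X ∪ Y) :=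
    union_subset (signatureOf_claimB_sdiff_subset hYV hclaim)
      (union_comm Y X ▸ signatureOf_claimB_sdiff_subset hXU hclaim.symm)
  rw [hInd _ (hUV ▸ union_subset_union hXU hYV)]
  exact ⟨NX ∪ NY, (hN.mono hA.subset hR).certifiesIndep hAB (hNXfin.union hNYfin)
    (hA ▸ hsatX.union hsatY)⟩

/-- if there are certifying matchings with compatible signatures then
X ∪ Y is independent. -/
theorem indep_union_of_compatible_signatures {α : Type*}
(G : SimpleGraph α) (A B : Set α)
    (hfin : (A ∪ B).Finite) (hAB : Disjoint A B)
    (hbip : ∀ x y, G.Adj x y → (x ∈ A ∧ y ∈ B) ∨ (x ∈ B ∧ y ∈ A))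
    (M : Matroid α) (hE : M.E = A ∪ B)
    (hInd : ∀ X ⊆ A ∪ B, (M.Indep X ↔ ∃ m, CertifiesIndep G A B X m))
    (U V : Set α) (hUV : U ∪ V = A ∪ B) (hdisj : Disjoint U V)
    (S : Set α) (hS : IsCrossingCover G A B U V S)
    (X Y : Set α) (hXU : X ⊆ U) (hYV : Y ⊆ V)
    (hX : M.Indep X) (hY : M.Indep Y)
    (hcomp : ∃ mX mY : Set (Sym2 α), CertifiesIndep G A B X mX ∧ CertifiesIndep G A B Y mY ∧
      SigCompatible (signatureOf G A B S U V X mX) (signatureOf G A B S V U Y mY)) :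
    M.Indep (X ∪ Y) :=
  indep_union_of_compatible_signatures_general G A B hfin hAB M hInd U V hUV hdisj S hS X Y hXU hYV
    hcomp
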